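/- arXiv:2210.06647 — 3 statements merged into one kernel-verified Lean document; each statement's English description precedes it below -/
import Mathlib

section
/- For any modified continued fraction ω = ⟨(a_j:ε_j)⟩_{j=1}^n of height n ≥ 1 and any complex z with |z| ≤ 1, both |μ_ω(z)| and |arg(ε_1·μ_ω(z))| are at most 1/(a_1 − 1). -/
/-- One step of the recursion `(x_{j-2}, x_{j-1}) ↦ (x_{j-1}, a_j x_{j-1} + ε_j x_{j-2})`. -/
def mcfStep (st : ℤ × ℤ) (t : ℤ × ℤ) : ℤ × ℤ := (st.2, t.1 * st.2 + t.2 * st.1)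

/-- `(p_{n-1}, p_n)` for the modified continued fraction `ω`. -/
def pPair (ω : List (ℤ × ℤ)) : ℤ × ℤ := ω.foldl mcfStep (1, 0)

/-- `(q_{n-1}, q_n)` for the modified continued fraction `ω`. -/
def qPair (ω : List (ℤ × ℤ)) : ℤ × ℤ := ω.foldl mcfStep (0, 1)

/-- `p_n(ω)` -/
def mcfp (ω : List (ℤ × ℤ)) : ℤ := (pPair ω).2
/-- `p_{n-1}(ω)` -/
def mcfp' (ω : List (ℤ × ℤ)) : ℤ := (pPair ω).1
/-- `q_n(ω)` -/
def mcfq (ω : List (ℤ × ℤ)) : ℤ := (qPair ω).2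
/-- `q_{n-1}(ω)` -/
def mcfq' (ω : List (ℤ × ℤ)) : ℤ := (qPair ω).1

/-- The signature `ℰ(ω) = (-1)^n ∏ ε_j`. -/
def sig (ω : List (ℤ × ℤ)) : ℤ := (-1) ^ ω.length * (ω.map Prod.snd).prod

/-- `ω` is a modified continued fraction: entries `a_j ≥ 2` and `ε_j = ±1`. -/
def IsMCF (ω : List (ℤ × ℤ)) : Prop := ∀ t ∈ ω, 2 ≤ t.1 ∧ (t.2 = 1 ∨ t.2 = -1)

/-- The Möbius transformation `μ_ω(z) = (p_n + ℰ(ω) z p_{n-1})/(q_n + ℰ(ω) z q_{n-1})`. -/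
noncomputable def mu (ω : List (ℤ × ℤ)) (z : ℂ) : ℂ :=
  ((mcfp ω : ℂ) + (sig ω : ℂ) * z * (mcfp' ω : ℂ)) /
  ((mcfq ω : ℂ) + (sig ω : ℂ) * z * (mcfq' ω : ℂ))

/-- Denominator of `μ_ω` at `z`. -/
noncomputable def muDen (ω : List (ℤ × ℤ)) (z : ℂ) : ℂ :=
  (mcfq ω : ℂ) + (sig ω : ℂ) * z * (mcfq' ω : ℂ)

/-! Once `|μ_ω(w)| ≤ 1` is known on the closed unit disc (by induction on the height), the
recursion `ε₁ μ_ω(z) = 1 / (a₁ + w)` with `|w| ≤ 1` puts `a₁ + w` in the half-plane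
`Re ≥ a₁ - 1` with `|Im| ≤ 1`; its modulus is then at least `a₁ - 1`, and its argument is at
most `|Im| / Re ≤ 1 / (a₁ - 1)` in absolute value because `|θ| ≤ |tan θ|` on `(-π/2, π/2)`. -/

open Complex Real

lemma Real.abs_le_abs_tan {x : ℝ} (hx : |x| < π / 2) : |x| ≤ |Real.tan x| := by
  rcases abs_cases x with ⟨hx', h0⟩ | ⟨hx', h0⟩ <;> rw [hx'] at hx ⊢
  · exact (Real.le_tan h0 hx).trans (le_abs_self _)
  · rw [← abs_neg, ← Real.tan_neg]
    exact (Real.le_tan (by linarith) hx).trans (le_abs_self _)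

lemma Complex.abs_arg_le_abs_im_div_re {x : ℂ} (hx : 0 < x.re) : |arg x| ≤ |x.im| / x.re :=
  calc |arg x| ≤ |Real.tan (arg x)| :=
        Real.abs_le_abs_tan (abs_arg_lt_pi_div_two_iff.2 (Or.inl hx))
    _ = |x.im| / x.re := by rw [tan_arg, abs_div, abs_of_pos hx]

section ShiftedDisc

variable {a : ℝ} {w : ℂ}

lemma sub_one_le_re_ofReal_add (hw : ‖w‖ ≤ 1) : a - 1 ≤ ((a : ℂ) + w).re := by
  simp only [add_re, ofReal_re]
  linarith [neg_abs_le w.re, abs_re_le_norm w]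

lemma norm_inv_ofReal_add_le (ha : 1 < a) (hw : ‖w‖ ≤ 1) :
    ‖((a : ℂ) + w)⁻¹‖ ≤ 1 / (a - 1) := by
  rw [norm_inv, ← one_div]
  exact one_div_le_one_div_of_le (by linarith)
    ((sub_one_le_re_ofReal_add hw).trans (re_le_norm _))

lemma abs_arg_inv_ofReal_add_le (ha : 1 < a) (hw : ‖w‖ ≤ 1) :
    |arg ((a : ℂ) + w)⁻¹| ≤ 1 / (a - 1) := by
  set x := (a : ℂ) + w
  have hre : a - 1 ≤ x.re := sub_one_le_re_ofReal_add hw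
  have him : |x.im| ≤ 1 := by
    simpa [x] using (abs_im_le_norm w).trans hw
  have hlt : |arg x| < π / 2 := abs_arg_lt_pi_div_two_iff.2 (Or.inl (by linarith))
  have hne : arg x ≠ π := fun h => by rw [h, abs_of_pos pi_pos] at hlt; linarith [pi_pos]
  rw [arg_inv, if_neg hne, abs_neg]
  calc |arg x| ≤ |x.im| / x.re := abs_arg_le_abs_im_div_re (by linarith)
    _ ≤ 1 / (a - 1) := div_le_div₀ zero_le_one him (by linarith) hre

end ShiftedDisc

lemma foldl_mcfStep (t : List (ℤ × ℤ)) (b c : ℤ) :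
    t.foldl mcfStep (b, c) = b • pPair t + c • qPair t := by
  induction t generalizing b c with
  | nil => simp [pPair, qPair]
  | cons s t ih =>
    show t.foldl mcfStep (mcfStep (b, c) s) =
      b • t.foldl mcfStep (mcfStep (1, 0) s) + c • t.foldl mcfStep (mcfStep (0, 1) s)
    simp only [mcfStep, ih]
    ext <;> simp <;> ring

lemma pPair_cons (a ε : ℤ) (t : List (ℤ × ℤ)) : pPair ((a, ε) :: t) = ε • qPair t := by
  rw [pPair, List.foldl_cons, mcfStep, foldl_mcfStep]
  simp

lemma qPair_cons (a ε : ℤ) (t : List (ℤ × ℤ)) :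
    qPair ((a, ε) :: t) = pPair t + a • qPair t := by
  rw [qPair, List.foldl_cons, mcfStep, foldl_mcfStep]
  simp

lemma sig_cons (a ε : ℤ) (t : List (ℤ × ℤ)) : sig ((a, ε) :: t) = -ε * sig t := by
  simp only [sig, List.length_cons, List.map_cons, List.prod_cons, pow_succ]
  ring

noncomputable def muNum (ω : List (ℤ × ℤ)) (z : ℂ) : ℂ :=
  (mcfp ω : ℂ) + (sig ω : ℂ) * z * (mcfp' ω : ℂ)

lemma mu_eq_muNum_div_muDen (ω : List (ℤ × ℤ)) (z : ℂ) : mu ω z = muNum ω z / muDen ω z := rfl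

lemma muNum_cons (a ε : ℤ) (t : List (ℤ × ℤ)) (z : ℂ) :
    muNum ((a, ε) :: t) z = ε * muDen t (-ε * z) := by
  simp only [muNum, muDen, mcfp, mcfp', mcfq, mcfq', pPair_cons, sig_cons, Prod.smul_fst,
    Prod.smul_snd, smul_eq_mul]
  push_cast
  ring

lemma muDen_cons (a ε : ℤ) (t : List (ℤ × ℤ)) (z : ℂ) :
    muDen ((a, ε) :: t) z = a * muDen t (-ε * z) + muNum t (-ε * z) := by
  simp only [muNum, muDen, mcfp, mcfp', mcfq, mcfq', qPair_cons, sig_cons, Prod.fst_add, Prod.snd_add,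
    Prod.smul_fst, Prod.smul_snd, smul_eq_mul]
  push_cast
  ring

lemma muDen_cons_of_ne_zero {a ε : ℤ} {t : List (ℤ × ℤ)} {z : ℂ} (h : muDen t (-ε * z) ≠ 0) :
    muDen ((a, ε) :: t) z = (a + mu t (-ε * z)) * muDen t (-ε * z) := by
  rw [muDen_cons, mu_eq_muNum_div_muDen, add_mul, div_mul_cancel₀ _ h]

lemma mu_cons_of_ne_zero {a ε : ℤ} {t : List (ℤ × ℤ)} {z : ℂ} (h : muDen t (-ε * z) ≠ 0) :
    mu ((a, ε) :: t) z = ε * (a + mu t (-ε * z))⁻¹ := by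
  rw [mu_eq_muNum_div_muDen, muNum_cons, muDen_cons_of_ne_zero h, mul_div_mul_right _ _ h,
    div_eq_mul_inv]

lemma isMCF_cons_iff {a ε : ℤ} {t : List (ℤ × ℤ)} :
    IsMCF ((a, ε) :: t) ↔ (2 ≤ a ∧ (ε = 1 ∨ ε = -1)) ∧ IsMCF t := by
  simp [IsMCF]

lemma norm_intCast_of_eq_one_or {ε : ℤ} (hε : ε = 1 ∨ ε = -1) : ‖(ε : ℂ)‖ = 1 := by
  rcases hε with rfl | rfl <;> simp

lemma intCast_mul_self_of_eq_one_or {ε : ℤ} (hε : ε = 1 ∨ ε = -1) : (ε : ℂ) * ε = 1 := by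
  rcases hε with rfl | rfl <;> norm_num

lemma IsMCF.muDen_ne_zero_and_norm_mu_le_one {ω : List (ℤ × ℤ)} (hω : IsMCF ω) {z : ℂ}
    (hz : ‖z‖ ≤ 1) : muDen ω z ≠ 0 ∧ ‖mu ω z‖ ≤ 1 := by
  induction ω generalizing z with
  | nil => simpa [mu, muDen, mcfp, mcfp', mcfq, mcfq', pPair, qPair, sig] using hz
  | cons s t ih =>
    obtain ⟨a, ε⟩ := s
    obtain ⟨⟨ha, hε⟩, ht⟩ := isMCF_cons_iff.1 hω
    have haR : (2 : ℝ) ≤ a := by exact_mod_cast ha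
    have hz' : ‖-(ε : ℂ) * z‖ ≤ 1 := by
      rwa [norm_mul, norm_neg, norm_intCast_of_eq_one_or hε, one_mul]
    obtain ⟨hD, hw⟩ := ih ht hz'
    have hre := sub_one_le_re_ofReal_add (a := a) hw
    push_cast at hre
    refine ⟨?_, ?_⟩
    · rw [muDen_cons_of_ne_zero hD]
      refine mul_ne_zero (fun h0 => ?_) hD
      rw [h0, zero_re] at hre
      linarith
    · rw [mu_cons_of_ne_zero hD, norm_mul, norm_intCast_of_eq_one_or hε, one_mul]
      have := norm_inv_ofReal_add_le (a := a) (by linarith) hw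
      push_cast at this
      exact this.trans ((div_le_one (by linarith : (0 : ℝ) < a - 1)).2 (by linarith))

/-- for `|z| ≤ 1`, both `|μ_ω(z)|` and `|arg(ε₁ μ_ω(z))|` are at most
`1/(a₁ - 1)`. -/
theorem mu_geometry (a₁ ε₁ : ℤ) (t : List (ℤ × ℤ)) (hω : IsMCF ((a₁, ε₁) :: t))
    (z : ℂ) (hz : ‖z‖ ≤ 1) :
    ‖mu ((a₁, ε₁) :: t) z‖ ≤ 1 / ((a₁ : ℝ) - 1) ∧
    |Complex.arg ((ε₁ : ℂ) * mu ((a₁, ε₁) :: t) z)| ≤ 1 / ((a₁ : ℝ) - 1) := by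
  obtain ⟨⟨ha, hε⟩, ht⟩ := isMCF_cons_iff.1 hω
  have haR : (1 : ℝ) < a₁ := by exact_mod_cast ha
  have hz' : ‖-(ε₁ : ℂ) * z‖ ≤ 1 := by
    rwa [norm_mul, norm_neg, norm_intCast_of_eq_one_or hε, one_mul]
  obtain ⟨hD, hw⟩ := ht.muDen_ne_zero_and_norm_mu_le_one hz'
  have hmu : mu ((a₁, ε₁) :: t) z = ε₁ * (((a₁ : ℝ) : ℂ) + mu t (-ε₁ * z))⁻¹ := by
    rw [mu_cons_of_ne_zero hD, ofReal_intCast]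
  constructor
  · rw [hmu, norm_mul, norm_intCast_of_eq_one_or hε, one_mul]
    exact norm_inv_ofReal_add_le haR hw
  · rw [hmu, ← mul_assoc, intCast_mul_self_of_eq_one_or hε, one_mul]
    exact abs_arg_inv_ofReal_add_le haR hw
end

section
/- If α ∈ ℂ* satisfies |α| < 1 and |arg α| < π/4, and θ ∈ [−π/13, π/13], and M > 0, then for |α| sufficiently small (depending only on M), Re(1/(4α)) < Re(1/α) − M − tan(θ)·Im(1/α) < Re(5/(4α)). -/
/-! Put `β = 1/α`. As `|arg α| < π/4`, also `|Im β| ≤ Re β`, hence `‖β‖ ≤ 2 Re β`, so `Re β > 2M`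
once `|α|` is small. With `|tan θ| ≤ tan (π/13) ≤ 1/4` the middle term lies in
`[3/4 Re β - M, 5/4 Re β - M]`, strictly between `Re β / 4` and `5/4 Re β`. -/

open Real

lemma Real.abs_tan_le_tan {x y : ℝ} (hyπ : y < π / 2) (hxy : |x| ≤ y) : |tan x| ≤ tan y := by
  have hy : 0 ≤ y := (abs_nonneg x).trans hxy
  have mem : ∀ z, |z| ≤ y → z ∈ Set.Ioo (-(π / 2)) (π / 2) := fun z hz ↦
    ⟨by linarith [neg_abs_le z], by linarith [le_abs_self z]⟩
  have mono := strictMonoOn_tan.monotoneOn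
  have hy_mem := mem y (abs_of_nonneg hy).le
  have hx_mem := mem x hxy
  refine abs_le.mpr ⟨?_, mono hx_mem hy_mem (le_abs_self x |>.trans hxy)⟩
  rw [← tan_neg]
  exact mono (mem (-y) (by rw [abs_neg, abs_of_nonneg hy])) hx_mem
    (by linarith [neg_abs_le x])

lemma Real.tan_pi_div_thirteen_le : tan (π / 13) ≤ 1 / 4 := by
  have hsin : sin (π / 13) < π / 13 := sin_lt (by positivity)
  have hcos : 1 - (π / 13) ^ 2 / 2 ≤ cos (π / 13) := one_sub_sq_div_two_le_cos
  have hcos_pos : 0 < cos (π / 13) :=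
    cos_pos_of_mem_Ioo ⟨by linarith [pi_pos], by linarith [pi_pos]⟩
  rw [tan_eq_sin_div_cos, div_le_iff₀ hcos_pos]
  nlinarith [pi_lt_d2, pi_gt_three]

lemma Complex.abs_im_le_re_of_abs_arg_le {z : ℂ} (h : |z.arg| ≤ π / 4) : |z.im| ≤ z.re := by
  rcases eq_or_ne z 0 with rfl | hz
  · simp
  have hre : 0 < z.re :=
    (abs_arg_lt_pi_div_two_iff.mp (by linarith [pi_pos])).resolve_right hz
  have htan : |z.im / z.re| ≤ 1 := by
    simpa [tan_arg, tan_pi_div_four] using Real.abs_tan_le_tan (by linarith [pi_pos]) h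
  rwa [abs_div, abs_of_pos hre, div_le_one hre] at htan

lemma Complex.norm_le_two_mul_re {z : ℂ} (h : |z.im| ≤ z.re) : ‖z‖ ≤ 2 * z.re := by
  linarith [norm_le_abs_re_add_abs_im z, abs_of_nonneg ((abs_nonneg z.im).trans h)]

lemma Complex.abs_im_inv_le_re_inv {z : ℂ} (h : |z.im| ≤ z.re) : |z⁻¹.im| ≤ z⁻¹.re := by
  rw [inv_re, inv_im, neg_div, abs_neg, abs_div, abs_of_nonneg (normSq_nonneg z)]
  exact div_le_div_of_nonneg_right h (normSq_nonneg z)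

lemma quarter_lt_sub_sub_mul_lt {a b t M : ℝ} (hM : 0 < M) (ha : 2 * M < a) (hb : |b| ≤ a)
    (ht : |t| ≤ 1 / 4) : 1 / 4 * a < a - M - t * b ∧ a - M - t * b < 5 / 4 * a := by
  have htb : |t * b| ≤ a / 4 := by
    rw [abs_mul]; nlinarith [abs_nonneg t, abs_nonneg b]
  constructor <;> linarith [abs_le.mp htb]

/-- for any `M > 0` there is `r > 0` such that whenever `0 < |α| < r`,
`|arg α| < π/4`, and `θ ∈ [-π/13, π/13]`, one has
`Re(1/(4α)) < Re(1/α) - M - tan θ · Im(1/α) < Re(5/(4α))`. -/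
theorem petal_width_estimate (M : ℝ) (hM : 0 < M) :
    ∃ r > 0, ∀ α : ℂ, α ≠ 0 → ‖α‖ < r → ‖α‖ < 1 →
      |Complex.arg α| < Real.pi / 4 →
      ∀ θ : ℝ, θ ∈ Set.Icc (-(Real.pi / 13)) (Real.pi / 13) →
        (1 / (4 * α)).re < (1 / α).re - M - Real.tan θ * (1 / α).im ∧
        (1 / α).re - M - Real.tan θ * (1 / α).im < (5 / (4 * α)).re := by
  refine ⟨1 / (4 * M), by positivity, fun α hα hr _ harg θ hθ ↦ ?_⟩
  have hβ : |(1 / α).im| ≤ (1 / α).re := by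
    simpa using Complex.abs_im_inv_le_re_inv (Complex.abs_im_le_re_of_abs_arg_le harg.le)
  have hβ_norm : 4 * M < ‖1 / α‖ := by
    rw [norm_div, norm_one, lt_one_div (by positivity) (norm_pos_iff.mpr hα)]
    exact hr
  have htan : |tan θ| ≤ 1 / 4 :=
    (Real.abs_tan_le_tan (by linarith [pi_pos]) (abs_le.mpr hθ)).trans tan_pi_div_thirteen_le
  have h4 : 1 / (4 * α) = ((1 / 4 : ℝ) : ℂ) * (1 / α) := by push_cast; ring
  have h5 : 5 / (4 * α) = ((5 / 4 : ℝ) : ℂ) * (1 / α) := by push_cast; ring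
  rw [h4, h5, Complex.re_ofReal_mul, Complex.re_ofReal_mul]
  exact quarter_lt_sub_sub_mul_lt hM (by linarith [Complex.norm_le_two_mul_re hβ]) hβ htan
end

section
/- The map ω ↦ μ_ω(0) sends the set of all finite-height modified continued fractions onto the set of rational numbers in the open interval (−1, 1): for every rational r with −1 < r < 1 there exists a finite modified continued fraction ω with μ_ω(0) = r. -/
lemma foldl_lin (ω : List (ℤ × ℤ)) : ∀ a b : ℤ,
    ω.foldl mcfStep (a, b) = a • ω.foldl mcfStep (1, 0) + b • ω.foldl mcfStep (0, 1) := by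
  induction ω with
  | nil => intro a b; ext <;> simp
  | cons t ω ih =>
    intro a b
    simp only [List.foldl_cons, mcfStep]
    rw [ih 0 (t.1 * 0 + t.2 * 1), ih 1 (t.1 * 1 + t.2 * 0), ih b (t.1 * b + t.2 * a)]
    ext <;> simp <;> ring

lemma mcfp_cons (t : ℤ × ℤ) (ω : List (ℤ × ℤ)) : mcfp (t :: ω) = t.2 * mcfq ω := by
  simp only [mcfp, pPair, List.foldl_cons, mcfStep]
  rw [foldl_lin]
  simp [mcfq, qPair]

lemma mcfq_cons (t : ℤ × ℤ) (ω : List (ℤ × ℤ)) :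
    mcfq (t :: ω) = mcfp ω + t.1 * mcfq ω := by
  simp only [mcfq, qPair, List.foldl_cons, mcfStep]
  rw [foldl_lin]
  simp [mcfp, pPair, mcfq, qPair]

lemma key : ∀ n : ℕ, ∀ r : ℚ, r.den ≤ n → -1 < r → r < 1 →
    ∃ ω : List (ℤ × ℤ), IsMCF ω ∧ (mcfp ω : ℚ) / (mcfq ω : ℚ) = r ∧ |mcfp ω| < mcfq ω := by
  intro n
  induction n with
  | zero => intro r hden _ _; exact absurd hden (by simpa using r.pos)
  | succ n ih =>
    intro r hden h1 h2
    rcases eq_or_ne r 0 with rfl | hr0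
    · refine ⟨[], by simp [IsMCF], ?_, ?_⟩ <;> simp [mcfp, mcfq, pPair, qPair]
    have habs : |r| < 1 := abs_lt.mpr ⟨h1, h2⟩
    have habs0 : 0 < |r| := abs_pos.mpr hr0
    have hnum0 : r.num ≠ 0 := Rat.num_ne_zero.mpr hr0
    have hN : (0 : ℤ) < |r.num| := abs_pos.mpr hnum0
    have hdenQ : (0 : ℚ) < (r.den : ℚ) := by exact_mod_cast r.pos
    have habsr : |r| = ((|r.num| : ℤ) : ℚ) / (r.den : ℚ) := by
      conv_lhs => rw [← Rat.num_div_den r]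
      rw [abs_div, abs_of_pos hdenQ]
      push_cast
      ring
    set x : ℚ := |r|⁻¹ with hxdef
    have hx1 : 1 < x := one_lt_inv_iff₀.mpr ⟨habs0, habs⟩
    set a : ℤ := ⌈x⌉ with hadef
    have ha2 : 2 ≤ a := by
      have h1' : (1 : ℚ) < (a : ℚ) := lt_of_lt_of_le hx1 (Int.le_ceil x)
      have : (1 : ℤ) < a := by exact_mod_cast h1'
      omega
    set w : ℚ := x - a with hwdef
    have hw0 : w ≤ 0 := by
      have := Int.le_ceil x
      simp only [hwdef, sub_nonpos]
      exact this
    have hwm1 : -1 < w := by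
      have := Int.ceil_lt_add_one x
      simp only [hwdef]
      linarith
    have hNQ : ((|r.num| : ℤ) : ℚ) ≠ 0 := by exact_mod_cast hN.ne'
    have hxeq : x = (r.den : ℚ) / ((|r.num| : ℤ) : ℚ) := by
      rw [hxdef, habsr, inv_div]
    have hweq : w = (((r.den : ℤ) - a * |r.num| : ℤ) : ℚ) / ((|r.num| : ℤ) : ℚ) := by
      rw [hwdef, hxeq]
      field_simp
      push_cast
      ring
    have hwden : (w.den : ℤ) ≤ |r.num| := by
      have hw2 : w = Rat.divInt ((r.den : ℤ) - a * |r.num|) |r.num| := by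
        rw [Rat.divInt_eq_div]; exact hweq
      have hdvd := Rat.den_dvd ((r.den : ℤ) - a * |r.num|) |r.num|
      rw [← hw2] at hdvd
      exact Int.le_of_dvd hN hdvd
    have hnumlt : |r.num| < (r.den : ℤ) := by
      have h := habs
      rw [habsr, div_lt_one hdenQ] at h
      exact_mod_cast h
    have hwden' : w.den ≤ n := by
      have h : (w.den : ℤ) < r.den := lt_of_le_of_lt hwden hnumlt
      have : w.den < r.den := by exact_mod_cast h
      omega
    obtain ⟨ω', hmcf', heq', habs'⟩ := ih w hwden' hwm1 (lt_of_le_of_lt hw0 one_pos)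
    set ε : ℤ := if 0 < r then 1 else -1 with hεdef
    have hε2 : (ε : ℚ) * (ε : ℚ) = 1 := by rw [hεdef]; split <;> norm_num
    have hεr : (ε : ℚ) * r = |r| := by
      rw [hεdef]
      rcases lt_trichotomy 0 r with h | h | h
      · simp [h, abs_of_pos h]
      · exact absurd h.symm hr0
      · simp [asymm h, abs_of_neg h]
    have hq'pos : 0 < mcfq ω' := lt_of_le_of_lt (abs_nonneg _) habs'
    have hp'lb : -(mcfq ω') < mcfp ω' := neg_lt_of_abs_lt habs'
    have hDpos : 0 < mcfp ω' + a * mcfq ω' := by nlinarith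
    have hq'Q : (0 : ℚ) < (mcfq ω' : ℚ) := by exact_mod_cast hq'pos
    refine ⟨(a, ε) :: ω', ?_, ?_, ?_⟩
    · intro t ht
      rcases List.mem_cons.mp ht with rfl | ht
      · refine ⟨ha2, ?_⟩
        rw [hεdef]; split <;> simp
      · exact hmcf' t ht
    · rw [mcfp_cons, mcfq_cons]
      have hr : r = (ε : ℚ) / ((a : ℚ) + w) := by
        have haw : (a : ℚ) + w = x := by rw [hwdef]; ring
        rw [haw, hxdef, div_eq_mul_inv, inv_inv, ← hεr, ← mul_assoc, hε2, one_mul]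
      have hcomb : (a : ℚ) + w =
          ((mcfp ω' : ℚ) + (a : ℚ) * (mcfq ω' : ℚ)) / (mcfq ω' : ℚ) := by
        rw [← heq']
        field_simp
        ring
      rw [hr, hcomb, div_div_eq_mul_div]
      push_cast
      ring
    · rw [mcfp_cons, mcfq_cons]
      have : |ε * mcfq ω'| = mcfq ω' := by
        rw [abs_mul, abs_of_pos hq'pos, hεdef]; split <;> simp
      simp only at this ⊢
      rw [this]
      nlinarith

/-- `ω ↦ μ_ω(0) = pₙ(ω)/qₙ(ω)` maps the finite modified continued
fractions onto the rationals in `(-1, 1)`. -/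
theorem mu_zero_surjective (r : ℚ) (h1 : -1 < r) (h2 : r < 1) :
    ∃ ω : List (ℤ × ℤ), IsMCF ω ∧ (mcfp ω : ℚ) / (mcfq ω : ℚ) = r := by
  obtain ⟨ω, h, heq, _⟩ := key r.den r le_rfl h1 h2
  exact ⟨ω, h, heq⟩
end
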